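/- arXiv:1705.02768 — 4 statements merged into one kernel-verified Lean document; each statement's English description precedes it below -/
import Mathlib

section
/- Let m and n be integers with 3 ≤ m ≤ n and set u = m+n-2. Then α(m,n) = C(u/2, (m-1)/2) if m and n are both odd; α(m,n) = C((u-1)/2, (m-2)/2) if m is even and n is odd; α(m,n) = C((u-1)/2, (m-1)/2) if m is odd and n is even; and α(m,n) = 0 if m and n are both even. Here C(a,b) denotes the binomial coefficient. -/
/-!
Over `ℝ` the polynomial `X ^ u + 1` is monic and separable, so its monic divisors are exactly the
products of subsets of its set of monic irreducible factors, and degrees add. A real irreducible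
polynomial has degree `1` or `2`, and the only real root of `x ^ u + 1` is `-1`, which occurs iff
`u` is odd. Hence the factors are `u / 2` quadratics, together with `X + 1` when `u` is odd, and a
divisor of degree `m - 1` is a choice of `(m - 1) / 2` quadratics, with `X + 1` added exactly when
`m - 1` is odd.
-/

/-- `alpha m u` is the number of monic real polynomials of degree `m-1` dividing `y^u + 1`. -/
noncomputable def alpha (m u : ℕ) : ℕ :=
  Set.ncard {h : Polynomial ℝ | h.Monic ∧ h.natDegree = m - 1 ∧ h ∣ (Polynomial.X ^ u + 1)}

open Finset UniqueFactorizationMonoid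

namespace Polynomial

section MonicDivisors

variable {K : Type*} [Field K] [DecidableEq K]

theorem monic_of_mem_normalizedFactors {p f : K[X]} (hf : f ∈ normalizedFactors p) :
    f.Monic :=
  (normalize_eq_self_iff_monic (irreducible_of_normalized_factor f hf).ne_zero).mp
    (normalize_normalized_factor f hf)

theorem prod_toFinset_normalizedFactors {p : K[X]} (hp : p.Monic) (hsf : Squarefree p) :
    ∏ f ∈ (normalizedFactors p).toFinset, f = p := by
  have hnodup := (squarefree_iff_nodup_normalizedFactors hp.ne_zero).mp hsf
  have hprod : ∏ f ∈ (normalizedFactors p).toFinset, f = (normalizedFactors p).prod := by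
    rw [prod_eq_multiset_prod, Multiset.map_id', Multiset.toFinset_val, hnodup.dedup]
  refine eq_of_monic_of_associated (monic_prod_of_monic _ _ fun f hf => ?_) hp
    (hprod ▸ prod_normalizedFactors hp.ne_zero)
  exact monic_of_mem_normalizedFactors (Multiset.mem_toFinset.mp hf)

theorem sum_natDegree_toFinset_normalizedFactors {p : K[X]} (hp : p.Monic)
    (hsf : Squarefree p) :
    ∑ f ∈ (normalizedFactors p).toFinset, f.natDegree = p.natDegree := by
  conv_rhs => rw [← prod_toFinset_normalizedFactors hp hsf]
  exact (natDegree_prod_of_monic _ _ fun f hf =>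
    monic_of_mem_normalizedFactors (Multiset.mem_toFinset.mp hf)).symm

theorem normalizedFactors_prod_of_subset {p : K[X]} {t : Finset K[X]}
    (ht : t ⊆ (normalizedFactors p).toFinset) :
    normalizedFactors (∏ f ∈ t, f) = t.val := by
  have hmem : ∀ f ∈ t.val, f ∈ normalizedFactors p := fun f hf =>
    Multiset.mem_toFinset.mp (ht hf)
  rw [prod_eq_multiset_prod, Multiset.map_id',
    normalizedFactors_prod_eq _ fun f hf => irreducible_of_normalized_factor f (hmem f hf),
    Multiset.map_congr rfl fun f hf => normalize_normalized_factor f (hmem f hf),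
    Multiset.map_id']

theorem monic_and_dvd_iff_exists_subset {p h : K[X]} (hp : p.Monic) (hsf : Squarefree p) :
    h.Monic ∧ h ∣ p ↔
      ∃ t ⊆ (normalizedFactors p).toFinset, ∏ f ∈ t, f = h := by
  constructor
  · rintro ⟨hh, hdvd⟩
    refine ⟨(normalizedFactors h).toFinset, fun f hf => ?_,
      prod_toFinset_normalizedFactors hh (hsf.squarefree_of_dvd hdvd)⟩
    have hle := (dvd_iff_normalizedFactors_le_normalizedFactors hh.ne_zero hp.ne_zero).mp hdvd
    exact Multiset.mem_toFinset.mpr (Multiset.mem_of_le hle (Multiset.mem_toFinset.mp hf))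
  · rintro ⟨t, ht, rfl⟩
    refine ⟨monic_prod_of_monic _ _ fun f hf =>
      monic_of_mem_normalizedFactors (Multiset.mem_toFinset.mp (ht hf)), ?_⟩
    calc ∏ f ∈ t, f ∣ ∏ f ∈ (normalizedFactors p).toFinset, f :=
          prod_dvd_prod_of_subset _ _ _ ht
      _ = p := prod_toFinset_normalizedFactors hp hsf

theorem ncard_monic_dvd_of_natDegree_eq {p : K[X]} (hp : p.Monic) (hsf : Squarefree p) (d : ℕ) :
    {h : K[X] | h.Monic ∧ h.natDegree = d ∧ h ∣ p}.ncard =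
      #{t ∈ (normalizedFactors p).toFinset.powerset | ∑ f ∈ t, f.natDegree = d} := by
  have hdeg : ∀ t ⊆ (normalizedFactors p).toFinset,
      (∏ f ∈ t, f).natDegree = ∑ f ∈ t, f.natDegree :=
    fun t ht => natDegree_prod_of_monic _ _ fun f hf =>
      monic_of_mem_normalizedFactors (Multiset.mem_toFinset.mp (ht hf))
  have hset : {h : K[X] | h.Monic ∧ h.natDegree = d ∧ h ∣ p} =
      ({t ∈ (normalizedFactors p).toFinset.powerset | ∑ f ∈ t, f.natDegree = d}.image
        fun t => ∏ f ∈ t, f : Finset K[X]) := by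
    ext h
    simp only [Set.mem_ofPred_eq, coe_image, coe_filter, mem_powerset, Set.mem_image,
      and_left_comm (b := h.natDegree = d),
      monic_and_dvd_iff_exists_subset hp hsf]
    constructor
    · rintro ⟨hd, t, ht, rfl⟩
      exact ⟨t, ⟨ht, hdeg t ht ▸ hd⟩, rfl⟩
    · rintro ⟨t, ⟨ht, hd⟩, rfl⟩
      exact ⟨hdeg t ht ▸ hd, t, ht, rfl⟩
  rw [hset, Set.ncard_coe_finset, card_image_of_injOn]
  intro t₁ ht₁ t₂ ht₂ heq
  have h₁ := normalizedFactors_prod_of_subset (mem_powerset.mp (mem_filter.mp ht₁).1)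
  rw [show ∏ f ∈ t₁, f = ∏ f ∈ t₂, f from heq,
    normalizedFactors_prod_of_subset (mem_powerset.mp (mem_filter.mp ht₂).1)] at h₁
  exact val_injective h₁.symm

end MonicDivisors

end Polynomial

namespace Finset

variable {α : Type*} {w : α → ℕ} {S : Finset α}

theorem card_filter_powerset_card_mul_two_add_eq (S : Finset α) {c d : ℕ} (hcd : d % 2 = c) :
    #{t ∈ S.powerset | #t * 2 + c = d} = (#S).choose (d / 2) := by
  rw [filter_congr fun t _ => show #t * 2 + c = d ↔ #t = d / 2 by omega,
    ← powersetCard_eq_filter, card_powersetCard]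

theorem card_filter_powerset_card_mul_two_add_eq_zero (S : Finset α) {c d : ℕ} (hc : c < 2)
    (hcd : d % 2 ≠ c) : #{t ∈ S.powerset | #t * 2 + c = d} = 0 := by
  rw [card_eq_zero, filter_eq_empty_iff]
  omega

theorem card_filter_powerset_sum_eq_of_forall_eq_two (hS : ∀ f ∈ S, w f = 2) (d : ℕ) :
    #{t ∈ S.powerset | ∑ f ∈ t, w f = d} = if Even d then (#S).choose (d / 2) else 0 := by
  rw [filter_congr fun t ht => show ∑ f ∈ t, w f = d ↔ #t * 2 + 0 = d by
    rw [sum_const_nat fun f hf => hS f (mem_powerset.mp ht hf), add_zero]]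
  split_ifs with hd
  · exact card_filter_powerset_card_mul_two_add_eq S (Nat.even_iff.mp hd)
  · exact card_filter_powerset_card_mul_two_add_eq_zero S (by norm_num)
      (by rw [Nat.not_even_iff.mp hd]; norm_num)

theorem card_filter_powerset_insert_sum_eq [DecidableEq α] {a : α} (ha : a ∉ S) (hwa : w a = 1)
    (hS : ∀ f ∈ S, w f = 2) (d : ℕ) :
    #{t ∈ (insert a S).powerset | ∑ f ∈ t, w f = d} = (#S).choose (d / 2) := by
  have hsplit : #{t ∈ (insert a S).powerset | ∑ f ∈ t, w f = d} =
      #{t ∈ S.powerset | #t * 2 + 0 = d} + #{t ∈ S.powerset | #t * 2 + 1 = d} := by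
    simp only [card_filter, sum_powerset_insert ha]
    congr 1 <;> refine sum_congr rfl fun t ht => ?_
    · rw [sum_const_nat fun f hf => hS f (mem_powerset.mp ht hf), add_zero]
    · rw [sum_insert (notMem_mono (mem_powerset.mp ht) ha), hwa,
        sum_const_nat fun f hf => hS f (mem_powerset.mp ht hf), add_comm]
  rw [hsplit]
  rcases Nat.mod_two_eq_zero_or_one d with hd | hd
  · rw [card_filter_powerset_card_mul_two_add_eq S hd,
      card_filter_powerset_card_mul_two_add_eq_zero S (by norm_num) (by omega), add_zero]
  · rw [card_filter_powerset_card_mul_two_add_eq_zero S (by norm_num) (by omega),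
      card_filter_powerset_card_mul_two_add_eq S hd, zero_add]

end Finset

namespace Polynomial

variable {u : ℕ}

theorem natDegree_X_pow_add_one {R : Type*} [Semiring R] [Nontrivial R] :
    (X ^ u + 1 : R[X]).natDegree = u := by
  simpa using natDegree_X_pow_add_C (n := u) (r := (1 : R))

theorem monic_X_pow_add_one {R : Type*} [CommRing R] [Nontrivial R] (hu : u ≠ 0) :
    (X ^ u + 1 : R[X]).Monic := by
  simpa using monic_X_pow_add_C (1 : R) hu

theorem squarefree_X_pow_add_one {K : Type*} [Field K] (hu : (u : K) ≠ 0) :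
    Squarefree (X ^ u + 1 : K[X]) := by
  simpa using (separable_X_pow_sub_C (-1 : K) hu (neg_ne_zero.mpr one_ne_zero)).squarefree

theorem isRoot_X_pow_add_one_iff {R : Type*} [CommRing R] [LinearOrder R] [IsStrictOrderedRing R]
    {x : R} : (X ^ u + 1 : R[X]).IsRoot x ↔ x = -1 ∧ Odd u := by
  simp [add_eq_zero_iff_eq_neg, pow_eq_neg_one_iff]

theorem eq_X_add_one_of_dvd_X_pow_add_one {R : Type*} [CommRing R] [LinearOrder R]
    [IsStrictOrderedRing R] {f : R[X]} (hf : f.Monic) (hdeg : f.natDegree = 1)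
    (hdvd : f ∣ X ^ u + 1) : f = X + 1 ∧ Odd u := by
  have hfX := hf.eq_X_add_C hdeg
  have hroot : f.IsRoot (-f.coeff 0) := by rw [hfX]; simp
  obtain ⟨hc, hu⟩ := isRoot_X_pow_add_one_iff.mp (hroot.dvd hdvd)
  exact ⟨by rw [hfX, neg_inj.mp hc, map_one], hu⟩

theorem X_add_one_mem_normalizedFactors_iff {K : Type*} [Field K] [LinearOrder K]
    [IsStrictOrderedRing K] (hu : u ≠ 0) :
    X + 1 ∈ normalizedFactors (X ^ u + 1 : K[X]) ↔ Odd u := by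
  classical
  have hX : (X + 1 : K[X]) = X - C (-1) := by simp
  rw [Polynomial.mem_normalizedFactors_iff (monic_X_pow_add_one hu).ne_zero, hX,
    dvd_iff_isRoot, isRoot_X_pow_add_one_iff]
  simp only [irreducible_X_sub_C, monic_X_sub_C, true_and]

theorem natDegree_eq_two_of_mem_normalizedFactors_X_pow_add_one {f : ℝ[X]}
    (hf : f ∈ normalizedFactors (X ^ u + 1 : ℝ[X])) (hne : f ≠ X + 1) : f.natDegree = 2 := by
  have hirr := irreducible_of_normalized_factor f hf
  have hlin : f.natDegree ≠ 1 := fun h => hne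
    (eq_X_add_one_of_dvd_X_pow_add_one (monic_of_mem_normalizedFactors hf) h
      (dvd_of_mem_normalizedFactors hf)).1
  have := hirr.natDegree_pos
  have := hirr.natDegree_le_two
  omega

theorem sum_natDegree_toFinset_normalizedFactors_X_pow_add_one (hu : u ≠ 0) :
    ∑ f ∈ (normalizedFactors (X ^ u + 1 : ℝ[X])).toFinset, f.natDegree = u := by
  rw [sum_natDegree_toFinset_normalizedFactors (monic_X_pow_add_one hu)
    (squarefree_X_pow_add_one (Nat.cast_ne_zero.mpr hu)), natDegree_X_pow_add_one]

end Polynomial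

open Polynomial

theorem alpha_eq_card_filter_powerset {u : ℕ} (hu : u ≠ 0) (m : ℕ) :
    alpha m u = #{t ∈ (normalizedFactors (X ^ u + 1 : ℝ[X])).toFinset.powerset |
      ∑ f ∈ t, f.natDegree = m - 1} :=
  ncard_monic_dvd_of_natDegree_eq (monic_X_pow_add_one hu)
    (squarefree_X_pow_add_one (Nat.cast_ne_zero.mpr hu)) (m - 1)

theorem alpha_of_even {u : ℕ} (hu : Even u) (hu0 : u ≠ 0) (m : ℕ) :
    alpha m u = if Even (m - 1) then (u / 2).choose ((m - 1) / 2) else 0 := by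
  set S := (normalizedFactors (X ^ u + 1 : ℝ[X])).toFinset with hS
  have hquad : ∀ f ∈ S, f.natDegree = 2 := fun f hf =>
    natDegree_eq_two_of_mem_normalizedFactors_X_pow_add_one (Multiset.mem_toFinset.mp hf)
      fun h => Nat.not_odd_iff_even.mpr hu <|
        (X_add_one_mem_normalizedFactors_iff hu0).mp (h ▸ Multiset.mem_toFinset.mp hf)
  have hcard : #S = u / 2 := by
    have := sum_natDegree_toFinset_normalizedFactors_X_pow_add_one hu0
    rw [← hS, sum_const_nat hquad] at this
    omega
  rw [alpha_eq_card_filter_powerset hu0, card_filter_powerset_sum_eq_of_forall_eq_two hquad, hcard]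

theorem alpha_of_odd {u : ℕ} (hu : Odd u) (m : ℕ) :
    alpha m u = (u / 2).choose ((m - 1) / 2) := by
  have hu0 : u ≠ 0 := hu.pos.ne'
  set S := (normalizedFactors (X ^ u + 1 : ℝ[X])).toFinset with hS
  have hX : X + 1 ∈ S :=
    Multiset.mem_toFinset.mpr ((X_add_one_mem_normalizedFactors_iff hu0).mpr hu)
  have hquad : ∀ f ∈ S.erase (X + 1), f.natDegree = 2 := fun f hf =>
    natDegree_eq_two_of_mem_normalizedFactors_X_pow_add_one
      (Multiset.mem_toFinset.mp (mem_of_mem_erase hf)) (ne_of_mem_erase hf)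
  have hlin : (X + 1 : ℝ[X]).natDegree = 1 := by simpa using natDegree_X_add_C (1 : ℝ)
  have hcard : #(S.erase (X + 1)) = u / 2 := by
    have := sum_natDegree_toFinset_normalizedFactors_X_pow_add_one hu0
    rw [← hS, ← insert_erase hX, sum_insert (notMem_erase _ _), sum_const_nat hquad,
      hlin] at this
    omega
  rw [alpha_eq_card_filter_powerset hu0, ← hS, ← insert_erase hX,
    card_filter_powerset_insert_sum_eq (notMem_erase _ _) hlin hquad, hcard]

theorem stmt2_general (m n u : ℕ) (hm : 3 ≤ m) (hu : u = m + n - 2) :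
    (Odd m → Odd n → alpha m u = Nat.choose (u / 2) ((m - 1) / 2)) ∧
    (Even m → Odd n → alpha m u = Nat.choose ((u - 1) / 2) ((m - 2) / 2)) ∧
    (Odd m → Even n → alpha m u = Nat.choose ((u - 1) / 2) ((m - 1) / 2)) ∧
    (Even m → Even n → alpha m u = 0) := by
  have hu0 : u ≠ 0 := by omega
  simp only [Nat.odd_iff, Nat.even_iff]
  refine ⟨fun hm' hn => ?_, fun hm' hn => ?_, fun hm' hn => ?_, fun hm' hn => ?_⟩
  · rw [alpha_of_even (Nat.even_iff.mpr (by omega)) hu0, if_pos (Nat.even_iff.mpr (by omega))]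
  · rw [alpha_of_odd (Nat.odd_iff.mpr (by omega))]
    congr 1 <;> omega
  · rw [alpha_of_odd (Nat.odd_iff.mpr (by omega))]
    congr 1
    omega
  · rw [alpha_of_even (Nat.even_iff.mpr (by omega)) hu0, if_neg (Nat.not_even_iff.mpr (by omega))]

theorem stmt2 (m n u : ℕ) (hm : 3 ≤ m) (hmn : m ≤ n) (hu : u = m + n - 2) :
    (Odd m → Odd n → alpha m u = Nat.choose (u / 2) ((m - 1) / 2)) ∧
    (Even m → Odd n → alpha m u = Nat.choose ((u - 1) / 2) ((m - 2) / 2)) ∧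
    (Odd m → Even n → alpha m u = Nat.choose ((u - 1) / 2) ((m - 1) / 2)) ∧
    (Even m → Even n → alpha m u = 0) :=
  stmt2_general m n u hm hu
end

section
/- Let m and n be integers with 3 ≤ m ≤ n and set u = m+n-2. Let a_1, …, a_{m-1} ∈ ℂ and set N = a_1A_1 + ⋯ + a_{m-1}A_{m-1} - A_m ∈ ℂ^{u×n}. Then rank N < n if and only if the polynomial y^{m-1} - a_{m-1}y^{m-2} - ⋯ - a_2y - a_1 divides y^u + 1 in ℂ[y]. -/
/-- The `u×n` matrices `A_1, …, A_m` (here indexed by `k = 0, …, m-1`, so that `Amat K m n u k`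
is `A_{k+1}`): for `k ≤ m-2`, `Amat K m n u k` has the `n×n` identity occupying rows
`k, …, k+n-1` (0-based) and all other entries `0`; `Amat K m n u (m-1)` (that is, `A_m`)
has `-1` in position `(0, n-1)`, `1` in positions `(m-1+c, c)` for `0 ≤ c ≤ n-2`, and `0`
elsewhere. -/
def Amat (K : Type*) [Ring K] (m n u : ℕ) (k : ℕ) : Matrix (Fin u) (Fin n) K :=
  Matrix.of fun r c =>
    if k < m - 1 then (if (r : ℕ) = k + (c : ℕ) then 1 else 0)
    else if (r : ℕ) = 0 ∧ (c : ℕ) = n - 1 then -1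
    else if (r : ℕ) = m - 1 + (c : ℕ) then 1 else 0

/-- `N = a_1 A_1 + ⋯ + a_{m-1} A_{m-1} - A_m` over ℂ, where `a` is 1-based. -/
noncomputable def Nmat (m n u : ℕ) (a : ℕ → ℂ) : Matrix (Fin u) (Fin n) ℂ :=
  (∑ k ∈ Finset.range (m - 1), a (k + 1) • Amat ℂ m n u k) - Amat ℂ m n u (m - 1)

open Polynomial

/-- The polynomial `P = y^{m-1} - a_{m-1}y^{m-2} - ⋯ - a_1`. -/
noncomputable def Ppoly (m : ℕ) (a : ℕ → ℂ) : ℂ[X] :=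
  X ^ (m - 1) - ∑ i ∈ Finset.Icc 1 (m - 1), C (a i) * X ^ (i - 1)

lemma Ppoly_coeff (m : ℕ) (a : ℕ → ℂ) (j : ℕ) :
    (Ppoly m a).coeff j =
      (if j = m - 1 then 1 else 0) - (if j + 1 ≤ m - 1 then a (j + 1) else 0) := by
  unfold Ppoly
  rw [Polynomial.coeff_sub, Polynomial.coeff_X_pow, Polynomial.finset_sum_coeff]
  congr 1
  have h : ∀ i ∈ Finset.Icc 1 (m - 1), (C (a i) * X ^ (i - 1)).coeff j
      = if i = j + 1 then a i else 0 := by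
    intro i hi
    rw [Polynomial.coeff_C_mul, Polynomial.coeff_X_pow]
    simp only [Finset.mem_Icc] at hi
    by_cases h : i = j + 1
    · rw [if_pos (by omega), if_pos h, mul_one]
    · rw [if_neg (by omega), if_neg h, mul_zero]
  rw [Finset.sum_congr rfl h, Finset.sum_ite_eq' (Finset.Icc 1 (m - 1)) (j + 1)]
  simp [Finset.mem_Icc]

lemma Ppoly_natDegree_le (m : ℕ) (a : ℕ → ℂ) : (Ppoly m a).natDegree ≤ m - 1 := by
  rw [Polynomial.natDegree_le_iff_coeff_eq_zero]
  intro j hj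
  rw [Ppoly_coeff, if_neg (by omega), if_neg (by omega)]
  ring

lemma Ppoly_coeff_top (m : ℕ) (a : ℕ → ℂ) : (Ppoly m a).coeff (m - 1) = 1 := by
  rw [Ppoly_coeff, if_pos rfl, if_neg (by omega)]
  ring

lemma Ppoly_monic (m : ℕ) (a : ℕ → ℂ) : (Ppoly m a).Monic :=
  Polynomial.monic_of_natDegree_le_of_coeff_eq_one (m - 1)
    (Ppoly_natDegree_le m a) (Ppoly_coeff_top m a)

lemma Ppoly_natDegree (m : ℕ) (a : ℕ → ℂ) : (Ppoly m a).natDegree = m - 1 :=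
  le_antisymm (Ppoly_natDegree_le m a)
    (Polynomial.le_natDegree_of_ne_zero (by rw [Ppoly_coeff_top]; exact one_ne_zero))

lemma Nmat_apply (m n u : ℕ) (a : ℕ → ℂ) (hm : 3 ≤ m) (r : Fin u) (c : Fin n) :
    Nmat m n u a r c =
      (if (c : ℕ) ≤ (r : ℕ) ∧ (r : ℕ) - (c : ℕ) ≤ m - 2 then a ((r : ℕ) - (c : ℕ) + 1) else 0)
      + (if (r : ℕ) = 0 ∧ (c : ℕ) = n - 1 then 1 else 0)
      - (if (r : ℕ) = m - 1 + (c : ℕ) then 1 else 0) := by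
  unfold Nmat Amat
  simp only [Matrix.sub_apply, Matrix.sum_apply, Matrix.smul_apply, Matrix.of_apply,
    smul_eq_mul]
  rw [if_neg (lt_irrefl (m - 1))]
  have hsum : (∑ k ∈ Finset.range (m - 1),
      a (k + 1) * (if k < m - 1 then (if (r : ℕ) = k + (c : ℕ) then (1 : ℂ) else 0)
        else if (r : ℕ) = 0 ∧ (c : ℕ) = n - 1 then -1
        else if (r : ℕ) = m - 1 + (c : ℕ) then 1 else 0))
      = (if (c : ℕ) ≤ (r : ℕ) ∧ (r : ℕ) - (c : ℕ) ≤ m - 2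
          then a ((r : ℕ) - (c : ℕ) + 1) else 0) := by
    by_cases hcr : (c : ℕ) ≤ (r : ℕ) ∧ (r : ℕ) - (c : ℕ) ≤ m - 2
    · rw [if_pos hcr]
      rw [Finset.sum_eq_single_of_mem ((r : ℕ) - (c : ℕ)) (by simp; omega)]
      · rw [if_pos (by omega), if_pos (by omega), mul_one]
      · intro k hk hkne
        simp only [Finset.mem_range] at hk
        rw [if_pos hk, if_neg (by omega), mul_zero]
    · rw [if_neg hcr]
      apply Finset.sum_eq_zero
      intro k hk
      simp only [Finset.mem_range] at hk
      rw [if_pos hk, if_neg (by omega), mul_zero]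
  rw [hsum]
  split_ifs <;> first | ring1 | (exfalso; omega)

/-- `q = ∑ v_c X^c`. -/
noncomputable def qpoly (n : ℕ) (v : Fin n → ℂ) : ℂ[X] :=
  ∑ c : Fin n, C (v c) * X ^ (c : ℕ)

lemma qpoly_coeff (n : ℕ) (v : Fin n → ℂ) (j : ℕ) :
    (qpoly n v).coeff j = if h : j < n then v ⟨j, h⟩ else 0 := by
  unfold qpoly
  rw [Polynomial.finset_sum_coeff]
  by_cases h : j < n
  · rw [dif_pos h, Finset.sum_eq_single (⟨j, h⟩ : Fin n)]
    · rw [Polynomial.coeff_C_mul, Polynomial.coeff_X_pow, if_pos rfl, mul_one]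
    · intro b _ hb
      rw [Polynomial.coeff_C_mul, Polynomial.coeff_X_pow, if_neg, mul_zero]
      exact fun hj => hb (Fin.ext hj.symm)
    · intro hmem; exact absurd (Finset.mem_univ _) hmem
  · rw [dif_neg h]
    apply Finset.sum_eq_zero
    intro b _
    rw [Polynomial.coeff_C_mul, Polynomial.coeff_X_pow,
      if_neg (by have := b.isLt; omega), mul_zero]

/-- The combination `q·(-P) + w·(X^u+1)`. -/
noncomputable def Qpoly (m n u : ℕ) (a : ℕ → ℂ) (v : Fin n → ℂ) (w : ℂ) : ℂ[X] :=
  qpoly n v * (-(Ppoly m a)) + C w * (X ^ u + 1)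

lemma Qpoly_coeff (m n u : ℕ) (a : ℕ → ℂ) (v : Fin n → ℂ) (w : ℂ) (j : ℕ) :
    (Qpoly m n u a v w).coeff j =
      (∑ c : Fin n, v c * (if (c : ℕ) ≤ j then -((Ppoly m a).coeff (j - (c : ℕ))) else 0))
      + w * ((if j = u then 1 else 0) + (if j = 0 then 1 else 0)) := by
  unfold Qpoly qpoly
  rw [Polynomial.coeff_add, Polynomial.coeff_C_mul, Polynomial.coeff_add,
    Polynomial.coeff_X_pow, Polynomial.coeff_one]
  congr 1
  rw [Finset.sum_mul, Polynomial.finset_sum_coeff]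
  apply Finset.sum_congr rfl
  intro c _
  rw [show C (v c) * X ^ (c : ℕ) * (-(Ppoly m a))
      = C (v c) * ((-(Ppoly m a)) * X ^ (c : ℕ)) from by ring,
    Polynomial.coeff_C_mul, Polynomial.coeff_mul_X_pow']
  by_cases h : (c : ℕ) ≤ j
  · rw [if_pos h, if_pos h, Polynomial.coeff_neg]
  · rw [if_neg h, if_neg h]

lemma Qpoly_coeff_high (m n u : ℕ) (a : ℕ → ℂ) (hm : 3 ≤ m) (hmn : m ≤ n)
    (hu : u = m + n - 2) (hn : n - 1 < n) (v : Fin n → ℂ) (j : ℕ) (hj : u ≤ j) :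
    (Qpoly m n u a v (v ⟨n - 1, hn⟩)).coeff j = 0 := by
  have hlv : ((⟨n - 1, hn⟩ : Fin n) : ℕ) = n - 1 := rfl
  rw [Qpoly_coeff]
  by_cases hju : j = u
  · subst hju
    rw [if_pos rfl, if_neg (by omega)]
    rw [Finset.sum_eq_single (⟨n - 1, hn⟩ : Fin n)]
    · rw [if_pos (by rw [hlv]; omega), hlv, Ppoly_coeff, if_pos (by omega),
        if_neg (by omega)]
      ring
    · intro b _ hb
      have hb' : (b : ℕ) < n - 1 := by
        have hbn := b.isLt
        rcases lt_or_eq_of_le (Nat.lt_succ_iff.mp (by omega : (b:ℕ) < n - 1 + 1)) with h | h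
        · exact h
        · exact absurd (Fin.ext (h.trans hlv.symm)) hb
      rw [if_pos (by have := b.isLt; omega), Ppoly_coeff, if_neg (by omega),
        if_neg (by omega)]
      ring
    · intro hmem; exact absurd (Finset.mem_univ _) hmem
  · rw [if_neg hju, if_neg (by omega)]
    have : ∀ c : Fin n, v c * (if (c : ℕ) ≤ j
        then -((Ppoly m a).coeff (j - (c : ℕ))) else 0) = 0 := by
      intro c
      have hc := c.isLt
      rw [if_pos (by omega), Ppoly_coeff, if_neg (by omega), if_neg (by omega)]
      ring
    rw [Finset.sum_congr rfl (fun c _ => this c)]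
    simp

lemma Nmat_entry_eq (m n u : ℕ) (a : ℕ → ℂ) (hm : 3 ≤ m) (hmn : m ≤ n)
    (hu : u = m + n - 2) (hn : n - 1 < n) (r : Fin u) (c : Fin n) :
    Nmat m n u a r c =
      (if (c : ℕ) ≤ (r : ℕ) then -((Ppoly m a).coeff ((r : ℕ) - (c : ℕ))) else 0)
      + (if c = (⟨n - 1, hn⟩ : Fin n) then ((0 : ℂ) + if (r : ℕ) = 0 then 1 else 0)
          else 0) := by
  rw [Nmat_apply m n u a hm r c, Ppoly_coeff]
  have hc := c.isLt
  have hr := r.isLt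
  have hceq : (c = (⟨n - 1, hn⟩ : Fin n)) ↔ ((c : ℕ) = n - 1) :=
    ⟨fun h => by rw [h], fun h => Fin.ext h⟩
  simp only [hceq]
  split_ifs <;> first | ring1 | (exfalso; omega)

lemma mulVec_coeff (m n u : ℕ) (a : ℕ → ℂ) (hm : 3 ≤ m) (hmn : m ≤ n)
    (hu : u = m + n - 2) (hn : n - 1 < n) (v : Fin n → ℂ) (r : Fin u) :
    (Nmat m n u a).mulVec v r = (Qpoly m n u a v (v ⟨n - 1, hn⟩)).coeff r := by
  rw [Qpoly_coeff]
  have hr := r.isLt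
  rw [if_neg (by omega)]
  have hsum : (∑ c : Fin n, v c * (if c = (⟨n - 1, hn⟩ : Fin n)
        then ((0 : ℂ) + if (r : ℕ) = 0 then 1 else 0) else 0))
      = v ⟨n - 1, hn⟩ * ((0 : ℂ) + if (r : ℕ) = 0 then 1 else 0) := by
    simp only [mul_ite, mul_zero]
    rw [Finset.sum_ite_eq' Finset.univ (⟨n - 1, hn⟩ : Fin n)
      (fun c => v c * ((0 : ℂ) + if (r : ℕ) = 0 then 1 else 0)),
      if_pos (Finset.mem_univ _)]
  rw [← hsum, ← Finset.sum_add_distrib]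
  show dotProduct (Nmat m n u a r) v = _
  rw [dotProduct]
  apply Finset.sum_congr rfl
  intro c _
  rw [mul_comm, ← mul_add]
  congr 1
  exact Nmat_entry_eq m n u a hm hmn hu hn r c

lemma mulVec_eq_zero_iff (m n u : ℕ) (a : ℕ → ℂ) (hm : 3 ≤ m) (hmn : m ≤ n)
    (hu : u = m + n - 2) (hn : n - 1 < n) (v : Fin n → ℂ) :
    (Nmat m n u a).mulVec v = 0 ↔ Qpoly m n u a v (v ⟨n - 1, hn⟩) = 0 := by
  constructor
  · intro h
    ext j
    rw [Polynomial.coeff_zero]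
    by_cases hj : j < u
    · rw [← mulVec_coeff m n u a hm hmn hu hn v ⟨j, hj⟩]
      exact congrFun h ⟨j, hj⟩
    · exact Qpoly_coeff_high m n u a hm hmn hu hn v j (by omega)
  · intro h
    funext r
    rw [Pi.zero_apply, mulVec_coeff m n u a hm hmn hu hn v r, h, Polynomial.coeff_zero]

lemma rank_lt_iff (m n u : ℕ) (a : ℕ → ℂ) :
    (Nmat m n u a).rank < n ↔ ∃ v ≠ 0, (Nmat m n u a).mulVec v = 0 := by
  have h1 := LinearMap.finrank_range_add_finrank_ker (Nmat m n u a).mulVecLin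
  have h2 : Module.finrank ℂ (Fin n → ℂ) = n := by simp
  rw [h2] at h1
  have hrank : (Nmat m n u a).rank
      = Module.finrank ℂ (LinearMap.range (Nmat m n u a).mulVecLin) := rfl
  constructor
  · intro h
    have hker : LinearMap.ker (Nmat m n u a).mulVecLin ≠ ⊥ := by
      intro hbot
      rw [hbot, finrank_bot] at h1
      omega
    obtain ⟨x, hx, hx0⟩ := Submodule.ne_bot_iff _ |>.mp hker
    exact ⟨x, hx0, by rwa [LinearMap.mem_ker, Matrix.mulVecLin_apply] at hx⟩
  · rintro ⟨x, hx0, hx⟩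
    have hker : LinearMap.ker (Nmat m n u a).mulVecLin ≠ ⊥ :=
      Submodule.ne_bot_iff _ |>.mpr
        ⟨x, by rw [LinearMap.mem_ker, Matrix.mulVecLin_apply]; exact hx, hx0⟩
    have hpos : 0 < Module.finrank ℂ (LinearMap.ker (Nmat m n u a).mulVecLin) := by
      rcases Nat.eq_zero_or_pos (Module.finrank ℂ (LinearMap.ker (Nmat m n u a).mulVecLin))
        with h | h
      · exact absurd (Submodule.finrank_eq_zero.mp h) hker
      · exact h
    omega

theorem stmt3 (m n u : ℕ) (hm : 3 ≤ m) (hmn : m ≤ n) (hu : u = m + n - 2) (a : ℕ → ℂ) :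
    (Nmat m n u a).rank < n ↔
      (Polynomial.X ^ (m - 1) -
          ∑ i ∈ Finset.Icc 1 (m - 1), Polynomial.C (a i) * Polynomial.X ^ (i - 1)) ∣
        (Polynomial.X ^ u + 1 : Polynomial ℂ) := by
  have hn : n - 1 < n := by omega
  have hP : (Polynomial.X ^ (m - 1) -
      ∑ i ∈ Finset.Icc 1 (m - 1), Polynomial.C (a i) * Polynomial.X ^ (i - 1)) = Ppoly m a := rfl
  rw [hP, rank_lt_iff m n u a]
  constructor
  · rintro ⟨v, hv0, hv⟩
    rw [mulVec_eq_zero_iff m n u a hm hmn hu hn v] at hv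
    unfold Qpoly at hv
    by_cases hw : v ⟨n - 1, hn⟩ = 0
    · exfalso
      rw [hw, map_zero, zero_mul, add_zero] at hv
      have hq0 : qpoly n v = 0 := by
        rcases mul_eq_zero.mp hv with h | h
        · exact h
        · exact absurd (neg_eq_zero.mp h) (Ppoly_monic m a).ne_zero
      apply hv0
      funext c
      have := congrArg (fun p => Polynomial.coeff p (c : ℕ)) hq0
      simpa [qpoly_coeff, c.isLt] using this
    · refine ⟨C (v ⟨n - 1, hn⟩)⁻¹ * qpoly n v, ?_⟩
      have h1 : qpoly n v * Ppoly m a = C (v ⟨n - 1, hn⟩) * (X ^ u + 1) := by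
        linear_combination -hv
      have h2 : (C (v ⟨n - 1, hn⟩) : ℂ[X]) ≠ 0 := by
        simpa using hw
      apply mul_left_cancel₀ h2
      rw [show C (v ⟨n - 1, hn⟩) * (Ppoly m a * (C (v ⟨n - 1, hn⟩)⁻¹ * qpoly n v))
          = (C (v ⟨n - 1, hn⟩) * C (v ⟨n - 1, hn⟩)⁻¹) * (qpoly n v * Ppoly m a) from by ring,
        ← Polynomial.C_mul, mul_inv_cancel₀ hw, Polynomial.C_1, one_mul, h1]
  · rintro ⟨q, hq⟩
    have hPm := Ppoly_monic m a
    have hXu : (X ^ u + 1 : ℂ[X]).Monic := by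
      rw [show (X ^ u + 1 : ℂ[X]) = X ^ u + C 1 from by rw [Polynomial.C_1]]
      exact Polynomial.monic_X_pow_add_C 1 (by omega)
    have hq0 : q ≠ 0 := by
      rintro rfl
      rw [mul_zero] at hq
      exact hXu.ne_zero hq
    have hdq : q.natDegree = n - 1 := by
      have h1 : (X ^ u + 1 : ℂ[X]).natDegree = u := by
        rw [show (X ^ u + 1 : ℂ[X]) = X ^ u + C 1 from by rw [Polynomial.C_1]]
        exact Polynomial.natDegree_X_pow_add_C
      have h2 : (Ppoly m a * q).natDegree = (Ppoly m a).natDegree + q.natDegree :=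
        hPm.natDegree_mul' hq0
      rw [← hq, h1, Ppoly_natDegree] at h2
      omega
    have hql : q.Monic := hPm.of_mul_monic_left (by rwa [← hq])
    set v : Fin n → ℂ := fun c => q.coeff (c : ℕ) with hvdef
    have hqv : qpoly n v = q := by
      ext j
      rw [qpoly_coeff]
      by_cases h : j < n
      · rw [dif_pos h]
      · rw [dif_neg h]
        symm
        apply Polynomial.coeff_eq_zero_of_natDegree_lt
        omega
    have hvlast : v ⟨n - 1, hn⟩ = 1 := by
      show q.coeff (n - 1) = 1
      rw [← hdq]
      exact hql.coeff_natDegree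
    refine ⟨v, ?_, ?_⟩
    · intro h0
      rw [h0] at hvlast
      simp at hvlast
    · rw [mulVec_eq_zero_iff m n u a hm hmn hu hn v]
      unfold Qpoly
      rw [hqv, hvlast, Polynomial.C_1, one_mul, hq]
      ring
end

section
/- Let m, n, p be integers with 3 ≤ m ≤ n, (m-1)(n-1)+1 ≤ p ≤ (m-1)n, and u = mn - p. Let T ∈ 𝒱, i.e., T ∈ ℝ^{n×p×m} and the top p×p submatrix of fl_2(T) is invertible. Then rank T = p if and only if dim U(μ(σ(T))) = p. -/
/-- The rank of a tensor `T ∈ ℝ^{a×b×c}`: the least `r` such that `T` is a sum of `r`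
rank-one tensors. -/
noncomputable def tensorRank {a b c : ℕ} (T : Fin a × Fin b × Fin c → ℝ) : ℕ :=
  sInf {r : ℕ | ∃ (u : Fin r → Fin a → ℝ) (v : Fin r → Fin b → ℝ) (w : Fin r → Fin c → ℝ),
    ∀ i j k, T (i, j, k) = ∑ s, u s i * v s j * w s k}

/-- The flattening `fl₂(T) ∈ ℝ^{mn×p}` of `T ∈ ℝ^{n×p×m}`: the vertical stack of the
slices `T_1, …, T_m ∈ ℝ^{n×p}`. -/
def fl2 {m n p : ℕ} (T : Fin n × Fin p × Fin m → ℝ) : Matrix (Fin (m * n)) (Fin p) ℝ :=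
  Matrix.of fun r c =>
    T (⟨(r : ℕ) % n, Nat.mod_lt _ (by
          rcases Nat.eq_zero_or_pos n with h0 | h0
          · exact absurd r.isLt (by simp [h0])
          · exact h0)⟩, c,
      ⟨(r : ℕ) / n, Nat.div_lt_of_lt_mul (lt_of_lt_of_le r.isLt (Nat.le_of_eq (Nat.mul_comm m n)))⟩)

/-- The top `p×p` submatrix of `fl₂(T)`. -/
def topBlock {m n p : ℕ} (hp : p ≤ m * n) (T : Fin n × Fin p × Fin m → ℝ) :
    Matrix (Fin p) (Fin p) ℝ :=
  Matrix.of fun i j => fl2 T ⟨(i : ℕ), lt_of_lt_of_le i.isLt hp⟩ j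

/-- The bottom `u×p` submatrix of `fl₂(T)` (where `p + u = mn`). -/
def botBlock {m n p : ℕ} (u : ℕ) (hpu : p + u = m * n) (T : Fin n × Fin p × Fin m → ℝ) :
    Matrix (Fin u) (Fin p) ℝ :=
  Matrix.of fun i j => fl2 T ⟨p + (i : ℕ), by have := i.isLt; omega⟩ j

/-- The `k`-th slice (`k = 0, …, m-1`) of `μ(W)`: the `m` slices are the consecutive
`u×n` blocks of columns of the `u×mn` matrix `(W, -E_u)`. -/
def muMap {m n p u : ℕ} (W : Matrix (Fin u) (Fin p) ℝ) (k : Fin m) :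
    Matrix (Fin u) (Fin n) ℝ :=
  Matrix.of fun r c =>
    if h : (k : ℕ) * n + (c : ℕ) < p then W r ⟨(k : ℕ) * n + (c : ℕ), h⟩
    else if (k : ℕ) * n + (c : ℕ) = p + (r : ℕ) then -1 else 0

/-- `ψ(a, b) ∈ ℝ^p`: the first `p` entries of the Kronecker product `a ⊗ b ∈ ℝ^{mn}`. -/
def psi {m n p : ℕ} (hn : 0 < n) (hp : p ≤ m * n) (a : Fin m → ℝ) (b : Fin n → ℝ) :
    Fin p → ℝ :=
  fun j => a ⟨(j : ℕ) / n,
      Nat.div_lt_of_lt_mul (lt_of_lt_of_le (lt_of_lt_of_le j.isLt hp) (Nat.le_of_eq (Nat.mul_comm m n)))⟩ *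
    b ⟨(j : ℕ) % n, Nat.mod_lt _ hn⟩


open Matrix Finset

namespace Stmt9Aux

variable {m n p u : ℕ}

lemma kr_lt {k i : ℕ} (hk : k < m) (hi : i < n) : k * n + i < m * n :=
  calc k * n + i < k * n + n := by omega
  _ = (k + 1) * n := by ring
  _ ≤ m * n := Nat.mul_le_mul_right n hk

/-- Kronecker product vector `a ⊗ b ∈ ℝ^{mn}`. -/
noncomputable def kr (hn : 0 < n) (a : Fin m → ℝ) (b : Fin n → ℝ) : Fin (m * n) → ℝ :=
  fun r => a ⟨(r : ℕ) / n,
      Nat.div_lt_of_lt_mul (lt_of_lt_of_le r.isLt (Nat.le_of_eq (Nat.mul_comm m n)))⟩ *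
    b ⟨(r : ℕ) % n, Nat.mod_lt _ hn⟩

lemma kr_mk (hn : 0 < n) (a : Fin m → ℝ) (b : Fin n → ℝ) (k : Fin m) (c : Fin n)
    {r : ℕ} (hr : r < m * n) (hrc : r = (k : ℕ) * n + (c : ℕ)) :
    kr hn a b ⟨r, hr⟩ = a k * b c := by
  subst hrc
  have h1 : ((k : ℕ) * n + (c : ℕ)) / n = (k : ℕ) := by
    rw [Nat.mul_comm, Nat.mul_add_div hn, Nat.div_eq_of_lt c.isLt, Nat.add_zero]
  have h2 : ((k : ℕ) * n + (c : ℕ)) % n = (c : ℕ) := by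
    rw [Nat.mul_comm, Nat.mul_add_mod, Nat.mod_eq_of_lt c.isLt]
  unfold kr
  congr 1
  · congr 1
    exact Fin.ext h1
  · congr 1
    exact Fin.ext h2

lemma kr_castLE (hn : 0 < n) (hp : p ≤ m * n) (a : Fin m → ℝ) (b : Fin n → ℝ) (j : Fin p) :
    kr hn a b (Fin.castLE hp j) = psi hn hp a b j := rfl

lemma sum_kron (f : Fin (m * n) → ℝ) :
    ∑ k : Fin m, ∑ c : Fin n, f ⟨(k : ℕ) * n + (c : ℕ), kr_lt k.isLt c.isLt⟩ = ∑ r, f r := by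
  rw [← Equiv.sum_comp finProdFinEquiv f, Fintype.sum_prod_type]
  apply Finset.sum_congr rfl
  intro k _
  apply Finset.sum_congr rfl
  intro c _
  congr 1
  apply Fin.ext
  simp [finProdFinEquiv]
  ring

end Stmt9Aux

namespace Stmt9Aux

variable {m n p u : ℕ}

lemma mulVec_slices (hn : 0 < n) (hp : p ≤ m * n) (hpu : p + u = m * n)
    (W : Matrix (Fin u) (Fin p) ℝ) (a : Fin m → ℝ) (b : Fin n → ℝ) (r : Fin u) :
    ((∑ k : Fin m, a k • muMap W k).mulVec b) r
      = W.mulVec (psi hn hp a b) r - kr hn a b ⟨p + (r : ℕ), by omega⟩ := by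
  classical
  set g : Fin (m * n) → ℝ := fun r' => kr hn a b r' *
    (if h : (r' : ℕ) < p then W r ⟨(r' : ℕ), h⟩
     else if (r' : ℕ) = p + (r : ℕ) then -1 else 0) with hg
  have step1 : ((∑ k : Fin m, a k • muMap W k).mulVec b) r = ∑ r', g r' := by
    rw [← sum_kron g]
    simp only [Matrix.mulVec, dotProduct, Finset.sum_apply, Matrix.sum_apply,
      Matrix.smul_apply, smul_eq_mul, Finset.sum_mul]
    rw [Finset.sum_comm]
    apply Finset.sum_congr rfl
    intro k _
    apply Finset.sum_congr rfl
    intro c _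
    rw [hg]
    simp only []
    rw [kr_mk hn a b k c (kr_lt k.isLt c.isLt) rfl]
    show a k * muMap W k r c * b c = _
    unfold muMap
    simp only [Matrix.of_apply]
    ring
  rw [step1]
  have hsplit : ∀ r' : Fin (m * n), g r' =
      (if h : (r' : ℕ) < p then W r ⟨(r' : ℕ), h⟩ * kr hn a b r' else 0)
      + (if r' = (⟨p + (r : ℕ), by omega⟩ : Fin (m * n)) then -(kr hn a b r') else 0) := by
    intro r'
    rw [hg]
    simp only [Fin.ext_iff]
    by_cases h1 : (r' : ℕ) < p
    · have h2 : ¬ ((r' : ℕ) = p + (r : ℕ)) := by omega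
      simp [h1, h2]
      ring
    · by_cases h2 : (r' : ℕ) = p + (r : ℕ)
      · simp [h1, h2]
      · simp [h1, h2]
  rw [Finset.sum_congr rfl (fun r' _ => hsplit r'), Finset.sum_add_distrib]
  congr 1
  · -- first sum equals W.mulVec ψ r
    have himg : ∀ r' : Fin (m * n), r' ∉ Finset.univ.map (Fin.castLEEmb hp) →
        (if h : (r' : ℕ) < p then W r ⟨(r' : ℕ), h⟩ * kr hn a b r' else 0) = 0 := by
      intro r' hr'
      rw [dif_neg]
      intro hlt
      exact hr' (Finset.mem_map.mpr ⟨⟨(r' : ℕ), hlt⟩, Finset.mem_univ _, Fin.ext rfl⟩)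
    rw [← Finset.sum_subset (Finset.subset_univ _) (fun x _ hx => himg x hx)]
    rw [Finset.sum_map]
    show _ = W.mulVec (psi hn hp a b) r
    simp only [Matrix.mulVec, dotProduct]
    apply Finset.sum_congr rfl
    intro j _
    rw [dif_pos (by exact j.isLt : ((Fin.castLEEmb hp) j : ℕ) < p)]
    rfl
  · rw [Finset.sum_ite_eq' Finset.univ (⟨p + (r : ℕ), by omega⟩ : Fin (m * n))
      (fun r' => -(kr hn a b r'))]
    simp

lemma cond_iff (hn : 0 < n) (hp : p ≤ m * n) (hpu : p + u = m * n)
    (W : Matrix (Fin u) (Fin p) ℝ) (a : Fin m → ℝ) (b : Fin n → ℝ) :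
    (∑ k : Fin m, a k • muMap W k).mulVec b = 0 ↔
      ∀ r : Fin u, W.mulVec (psi hn hp a b) r = kr hn a b ⟨p + (r : ℕ), by omega⟩ := by
  rw [funext_iff]
  apply forall_congr'
  intro r
  rw [mulVec_slices hn hp hpu W a b r]
  rw [Pi.zero_apply, sub_eq_zero]

end Stmt9Aux

namespace Stmt9Aux

variable {m n p u : ℕ}

lemma fl2_eq (hn : 0 < n) {r : ℕ} {T : Fin n × Fin p × Fin m → ℝ}
    (uu : Fin r → Fin n → ℝ) (vv : Fin r → Fin p → ℝ) (ww : Fin r → Fin m → ℝ)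
    (hT : ∀ i j k, T (i, j, k) = ∑ s, uu s i * vv s j * ww s k)
    (row : Fin (m * n)) (j : Fin p) :
    fl2 T row j = ∑ s, kr hn (ww s) (uu s) row * vv s j := by
  show T (_, j, _) = _
  rw [hT]
  refine Finset.sum_congr rfl (fun s _ => ?_)
  unfold kr
  ring

lemma fl2_mk (hn : 0 < n) (T : Fin n × Fin p × Fin m → ℝ) (k : Fin m) (i : Fin n) (j : Fin p) :
    fl2 T ⟨(k : ℕ) * n + (i : ℕ), kr_lt k.isLt i.isLt⟩ j = T (i, j, k) := by
  have h2 : ((k : ℕ) * n + (i : ℕ)) % n = (i : ℕ) := by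
    rw [Nat.mul_comm, Nat.mul_add_mod, Nat.mod_eq_of_lt i.isLt]
  have h3 : ((k : ℕ) * n + (i : ℕ)) / n = (k : ℕ) := by
    rw [Nat.mul_comm, Nat.mul_add_div hn, Nat.div_eq_of_lt i.isLt, Nat.add_zero]
  have e1 : (⟨((k : ℕ) * n + (i : ℕ)) % n, Nat.mod_lt _ hn⟩ : Fin n) = i := Fin.ext h2
  have e2 : (⟨((k : ℕ) * n + (i : ℕ)) / n,
      Nat.div_lt_of_lt_mul (lt_of_lt_of_le (kr_lt k.isLt i.isLt)
        (Nat.le_of_eq (Nat.mul_comm m n)))⟩ : Fin m) = k := Fin.ext h3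
  unfold fl2
  simp only [Matrix.of_apply]
  rw [e1, e2]

lemma rank_lb (hn : 0 < n) (hp : p ≤ m * n) {T : Fin n × Fin p × Fin m → ℝ}
    (hT : IsUnit (topBlock hp T).det) {r : ℕ}
    (h : ∃ (uu : Fin r → Fin n → ℝ) (vv : Fin r → Fin p → ℝ) (ww : Fin r → Fin m → ℝ),
      ∀ i j k, T (i, j, k) = ∑ s, uu s i * vv s j * ww s k) : p ≤ r := by
  obtain ⟨uu, vv, ww, hT'⟩ := h
  set A : Matrix (Fin p) (Fin r) ℝ :=
    Matrix.of fun i s => kr hn (ww s) (uu s) ⟨(i : ℕ), lt_of_lt_of_le i.isLt hp⟩ with hA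
  set B : Matrix (Fin r) (Fin p) ℝ := Matrix.of fun s j => vv s j with hB
  have hF : topBlock hp T = A * B := by
    ext i j
    rw [Matrix.mul_apply]
    exact fl2_eq hn uu vv ww hT' ⟨(i : ℕ), lt_of_lt_of_le i.isLt hp⟩ j
  have h1 : (topBlock hp T).rank = p := by
    rw [Matrix.rank_of_isUnit _ ((Matrix.isUnit_iff_isUnit_det _).mpr hT)]
    simp
  calc p = (A * B).rank := by rw [← hF, h1]
  _ ≤ A.rank := Matrix.rank_mul_le_left A B
  _ ≤ r := by simpa using A.rank_le_card_width

theorem main_aux (m n p u : ℕ) (hn : 0 < n) (hp : p ≤ m * n) (hpu : p + u = m * n)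
    (hppos : 0 < p) (T : Fin n × Fin p × Fin m → ℝ)
    (hT : IsUnit (topBlock hp T).det) :
    tensorRank T = p ↔
      Module.finrank ℝ ↥(Submodule.span ℝ
        {v : Fin p → ℝ | ∃ (a : Fin m → ℝ) (b : Fin n → ℝ),
          (∑ k : Fin m, a k • muMap (botBlock u hpu T * (topBlock hp T)⁻¹) k).mulVec b = 0 ∧
          v = psi hn hp a b}) = p := by
  classical
  set F := topBlock hp T with hFdef
  set G := botBlock u hpu T with hGdef
  set W := G * F⁻¹ with hWdef
  set S : Set (Fin p → ℝ) := {v : Fin p → ℝ | ∃ (a : Fin m → ℝ) (b : Fin n → ℝ),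
    (∑ k : Fin m, a k • muMap W k).mulVec b = 0 ∧ v = psi hn hp a b} with hSdef
  constructor
  · -- rank = p → finrank = p
    intro hrank
    have hne : {r : ℕ | ∃ (uu : Fin r → Fin n → ℝ) (vv : Fin r → Fin p → ℝ)
        (ww : Fin r → Fin m → ℝ), ∀ i j k, T (i, j, k) = ∑ s, uu s i * vv s j * ww s k}.Nonempty := by
      by_contra hcon
      rw [Set.not_nonempty_iff_eq_empty] at hcon
      have : tensorRank T = 0 := by
        unfold tensorRank
        rw [hcon]
        exact Nat.sInf_empty
      omega
    have hmemset : tensorRank T ∈ {r : ℕ | ∃ (uu : Fin r → Fin n → ℝ) (vv : Fin r → Fin p → ℝ)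
        (ww : Fin r → Fin m → ℝ), ∀ i j k, T (i, j, k) = ∑ s, uu s i * vv s j * ww s k} :=
      Nat.sInf_mem hne
    rw [hrank] at hmemset
    obtain ⟨uu, vv, ww, hdec⟩ := hmemset
    set H : Matrix (Fin p) (Fin p) ℝ := Matrix.of fun j s => psi hn hp (ww s) (uu s) j with hH
    set V : Matrix (Fin p) (Fin p) ℝ := Matrix.of fun s j => vv s j with hV
    set Bm : Matrix (Fin u) (Fin p) ℝ :=
      Matrix.of fun r s => kr hn (ww s) (uu s) ⟨p + (r : ℕ), by omega⟩ with hBm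
    have hFHV : F = H * V := by
      ext i j
      rw [Matrix.mul_apply]
      exact fl2_eq hn uu vv ww hdec ⟨(i : ℕ), lt_of_lt_of_le i.isLt hp⟩ j
    have hGBV : G = Bm * V := by
      ext i j
      rw [Matrix.mul_apply]
      exact fl2_eq hn uu vv ww hdec ⟨p + (i : ℕ), by omega⟩ j
    have hdetF : IsUnit F.det := hT
    rw [hFHV, Matrix.det_mul] at hdetF
    have hHdet : IsUnit H.det := isUnit_of_mul_isUnit_left hdetF
    have hVdet : IsUnit V.det := isUnit_of_mul_isUnit_right hdetF
    have hWH : W * H = Bm := by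
      rw [hWdef, hGBV, hFHV, Matrix.mul_inv_rev]
      rw [show Bm * V * (V⁻¹ * H⁻¹) * H = Bm * (V * (V⁻¹ * (H⁻¹ * H))) by
        simp only [Matrix.mul_assoc]]
      rw [Matrix.nonsing_inv_mul H hHdet, Matrix.mul_one, Matrix.mul_nonsing_inv V hVdet,
        Matrix.mul_one]
    have hcol : ∀ s : Fin p, (fun j => H j s) ∈ S := by
      intro s
      refine ⟨ww s, uu s, ?_, rfl⟩
      rw [cond_iff hn hp hpu W (ww s) (uu s)]
      intro r
      have h1 : W.mulVec (psi hn hp (ww s) (uu s)) r = (W * H) r s := by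
        simp [Matrix.mulVec, Matrix.mul_apply, dotProduct, hH]
      rw [h1, hWH]
      rfl
    have hspan : Submodule.span ℝ S = ⊤ := by
      apply top_unique
      have hsur : Function.Surjective H.mulVec :=
        Matrix.mulVec_surjective_iff_isUnit.mpr ((Matrix.isUnit_iff_isUnit_det H).mpr hHdet)
      have hrange : LinearMap.range H.mulVecLin = ⊤ := LinearMap.range_eq_top.mpr hsur
      rw [Matrix.range_mulVecLin] at hrange
      rw [← hrange]
      apply Submodule.span_mono
      rintro _ ⟨s, rfl⟩
      exact hcol s
    rw [hspan, finrank_top]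
    exact Module.finrank_fin_fun ℝ
  · -- finrank = p → rank = p
    intro hdim
    have hspan : Submodule.span ℝ S = ⊤ := by
      apply Submodule.eq_top_of_finrank_eq
      rw [hdim, Module.finrank_fin_fun ℝ]
    obtain ⟨t, hts, htsp, htind⟩ := exists_linearIndependent ℝ S
    rw [hspan] at htsp
    have htfin : t.Finite := htind.setFinite
    haveI : Fintype t := htfin.fintype
    have hcard : Fintype.card t = p := by
      have h1 : Module.finrank ℝ ↥(Submodule.span ℝ t) = t.toFinset.card :=
        finrank_span_set_eq_card htind
      rw [htsp, finrank_top, Module.finrank_fin_fun ℝ] at h1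
      rw [Set.toFinset_card] at h1
      omega
    let e : Fin p ≃ t := (Fintype.equivFinOfCardEq hcard).symm
    set x : Fin p → (Fin p → ℝ) := fun s => ((e s : t) : Fin p → ℝ) with hx
    have hxind : LinearIndependent ℝ x := htind.comp e e.injective
    have hxS : ∀ s, x s ∈ S := fun s => hts (e s).2
    choose aa bb hab1 hab2 using hxS
    set H : Matrix (Fin p) (Fin p) ℝ := Matrix.of fun j s => x s j with hH
    have hHunit : IsUnit H := by
      rw [← Matrix.linearIndependent_cols_iff_isUnit]
      exact hxind
    have hHdet : IsUnit H.det := (Matrix.isUnit_iff_isUnit_det H).mp hHunit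
    set V : Matrix (Fin p) (Fin p) ℝ := H⁻¹ * F with hV
    have hHV : H * V = F := by
      rw [hV, ← Matrix.mul_assoc, Matrix.mul_nonsing_inv H hHdet, Matrix.one_mul]
    have hWH : ∀ (r : Fin u) (s : Fin p),
        (W * H) r s = kr hn (aa s) (bb s) ⟨p + (r : ℕ), by omega⟩ := by
      intro r s
      have h1 : (W * H) r s = W.mulVec (psi hn hp (aa s) (bb s)) r := by
        rw [← hab2 s]
        simp [Matrix.mulVec, Matrix.mul_apply, dotProduct, hH, hx]
      rw [h1]
      exact (cond_iff hn hp hpu W (aa s) (bb s)).mp (hab1 s) r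
    have hWHV : (W * H) * V = G := by
      rw [Matrix.mul_assoc, hHV, hWdef, Matrix.mul_assoc,
        Matrix.nonsing_inv_mul F hT, Matrix.mul_one]
    have hKr : ∀ (row : Fin (m * n)) (j : Fin p),
        fl2 T row j = ∑ s, kr hn (aa s) (bb s) row * V s j := by
      intro row j
      by_cases hrow : (row : ℕ) < p
      · have h1 : fl2 T row j = F ⟨(row : ℕ), hrow⟩ j := by
          rw [hFdef]
          show fl2 T row j = fl2 T ⟨(row : ℕ), _⟩ j
          congr 1
        rw [h1, ← hHV, Matrix.mul_apply]
        apply Finset.sum_congr rfl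
        intro s _
        congr 1
        show x s ⟨(row : ℕ), hrow⟩ = _
        rw [hab2 s]
        rfl
      · set r : Fin u := ⟨(row : ℕ) - p, by omega⟩ with hr
        have h1 : fl2 T row j = G r j := by
          rw [hGdef]
          show fl2 T row j = fl2 T ⟨p + ((row : ℕ) - p), _⟩ j
          congr 1
          exact Fin.ext (show (row : ℕ) = p + ((row : ℕ) - p) by omega)
        rw [h1, ← hWHV, Matrix.mul_apply]
        apply Finset.sum_congr rfl
        intro s _
        rw [hWH r s]
        congr 1
        congr 1
        apply Fin.ext
        simp only [hr, Fin.val_mk]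
        omega
    have hmem : p ∈ {r : ℕ | ∃ (uu : Fin r → Fin n → ℝ) (vv : Fin r → Fin p → ℝ)
        (ww : Fin r → Fin m → ℝ), ∀ i j k, T (i, j, k) = ∑ s, uu s i * vv s j * ww s k} := by
      refine ⟨fun s => bb s, fun s j => V s j, fun s => aa s, ?_⟩
      intro i j k
      have hlt : (k : ℕ) * n + (i : ℕ) < m * n := kr_lt k.isLt i.isLt
      have h1 : T (i, j, k) = fl2 T ⟨(k : ℕ) * n + (i : ℕ), hlt⟩ j :=
        (fl2_mk hn T k i j).symm
      rw [h1, hKr]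
      apply Finset.sum_congr rfl
      intro s _
      rw [kr_mk hn (aa s) (bb s) k i hlt rfl]
      ring
    apply le_antisymm
    · exact Nat.sInf_le hmem
    · exact le_csInf ⟨p, hmem⟩ (fun r hr => rank_lb hn hp hT hr)

end Stmt9Aux

theorem stmt9 (m n p u : ℕ) (hm : 3 ≤ m) (hmn : m ≤ n)
    (hp1 : (m - 1) * (n - 1) + 1 ≤ p) (hp2 : p ≤ (m - 1) * n) (hu : u = m * n - p)
    (T : Fin n × Fin p × Fin m → ℝ)
    (hT : IsUnit (topBlock (le_trans hp2 (Nat.mul_le_mul (Nat.sub_le m 1) (le_refl n))) T).det) :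
    tensorRank T = p ↔
      Module.finrank ℝ ↥(Submodule.span ℝ
        {v : Fin p → ℝ | ∃ (a : Fin m → ℝ) (b : Fin n → ℝ),
          (∑ k : Fin m,
              a k • muMap
                (botBlock u
                    (by
                      have h : p ≤ m * n :=
                        le_trans hp2 (Nat.mul_le_mul (Nat.sub_le m 1) (le_refl n))
                      omega) T *
                  (topBlock (le_trans hp2 (Nat.mul_le_mul (Nat.sub_le m 1) (le_refl n))) T)⁻¹)
                k).mulVec b = 0 ∧
          v = psi (by omega) (le_trans hp2 (Nat.mul_le_mul (Nat.sub_le m 1) (le_refl n))) a b}) =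
        p := by
  have hple : p ≤ m * n := le_trans hp2 (Nat.mul_le_mul (Nat.sub_le m 1) (le_refl n))
  have hn : 0 < n := by omega
  have hpu : p + u = m * n := by rw [hu]; exact Nat.add_sub_cancel' hple
  have hppos : 0 < p := lt_of_lt_of_le (Nat.succ_pos _) hp1
  exact Stmt9Aux.main_aux m n p u hn hple hpu hppos T hT
end

section
/- Let m and n be integers with 3 ≤ m ≤ n, set u = m+n-2, and let a_1, …, a_{m-1} ∈ ℂ. Let U be the u×u matrix with entries U_{ij} = a_{m-1-(j-i)} whenever 0 ≤ j-i ≤ m-2, U_{ij} = -1 whenever i = j+1, U_{1u} = 1, and all other entries 0. For 0 ≤ t ≤ u-1, let U^{(t)} be the (u-t)×(u-t) matrix obtained from U by deleting its first t rows and its first t columns. Then det U^{(t)} = λ_{u+m-1-t} + δ_{0,t}, where δ_{0,t} is the Kronecker delta (equal to 1 if t = 0 and 0 otherwise). -/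
/-- The `u×u` matrix `U`: `U_{ij} = a_{m-1-(j-i)}` when `0 ≤ j-i ≤ m-2` (with `a` 1-based),
`U_{ij} = -1` when `i = j+1`, `U` has a `1` in the upper-right corner, and all other
entries are `0` (here rows and columns are 0-based). -/
def Umat (m u : ℕ) (a : ℕ → ℂ) : Matrix (Fin u) (Fin u) ℂ :=
  Matrix.of fun i j =>
    if (i : ℕ) ≤ (j : ℕ) ∧ (j : ℕ) - (i : ℕ) ≤ m - 2 then a (m - 1 - ((j : ℕ) - (i : ℕ)))
    else if (i : ℕ) = (j : ℕ) + 1 then -1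
    else if (i : ℕ) = 0 ∧ (j : ℕ) = u - 1 then 1
    else 0


/-!
The trailing principal minors `D t` of `U` (rows and columns `t, …, u - 1`) are minors of an
upper Hessenberg matrix with subdiagonal `-1`, so expanding along the first column gives
`D t = ∑ₖ U t k * D (k + 1)`. For `t ≥ 1`, row `t` of `U` is the band `a (m - 1), …, a 1`,
so this is the recurrence of `λ` run backwards from `D u = 1 = λ (m - 1)`; where the band runs
past the last column, the missing terms are matched by the zeros `λ 1 = … = λ (m - 2)`. Row `0`
also has the corner entry `1`, which contributes the extra `D u = 1` to `D 0`.
-/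

open Finset Matrix

section Hessenberg

variable {R : Type*} [CommRing R]

def diagBlock (f : ℕ → ℕ → R) (s N : ℕ) : Matrix (Fin N) (Fin N) R :=
  Matrix.of fun i j => f (s + i) (s + j)

variable {f : ℕ → ℕ → R}

/-- With an arbitrary first row the expansion along column `0` becomes an induction: column `0`
has nonzero entries only in rows `0` and `1`, and deleting row `1` leaves a matrix of the same
shape. -/
theorem det_updateRow_zero_diagBlock (hsub : ∀ i, f (i + 1) i = -1)
    (hlow : ∀ i j, j + 1 < i → f i j = 0) (r : ℕ → R) (N s : ℕ) :
    ((diagBlock f s (N + 1)).updateRow 0 fun j => r (s + j)).det =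
      ∑ k ∈ range (N + 1), r (s + k) * (diagBlock f (s + k + 1) (N - k)).det := by
  induction N generalizing s with
  | zero => simp [det_unique]
  | succ N ih =>
    set A := (diagBlock f s (N + 2)).updateRow 0 fun j => r (s + j)
    have h00 : A 0 0 = r s := by simp [A]
    have h10 : A 1 0 = -1 := by simp [A, diagBlock, updateRow_apply, hsub]
    have hcol : ∀ i : Fin N, A i.succ.succ 0 = 0 := fun i => by
      simp only [A, diagBlock, updateRow_apply, Fin.succ_ne_zero, ↓reduceIte, of_apply,
        Fin.val_succ, Fin.coe_ofNat_eq_mod, Nat.zero_mod, add_zero]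
      exact hlow _ _ (by omega)
    have hminor₀ : A.submatrix (Fin.succAbove 0) Fin.succ = diagBlock f (s + 1) (N + 1) := by
      ext i j
      simp only [A, diagBlock, Fin.succAbove_zero, submatrix_apply, updateRow_apply,
        Fin.succ_ne_zero, ↓reduceIte, of_apply, Fin.val_succ]
      ring_nf
    have hminor₁ : A.submatrix (Fin.succAbove 1) Fin.succ =
        (diagBlock f (s + 1) (N + 1)).updateRow 0 fun j => r (s + 1 + j) := by
      ext i j
      cases i using Fin.cases with
      | zero =>
        simp only [A, diagBlock, submatrix_apply, Fin.one_succAbove_zero, updateRow_apply,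
          ↓reduceIte, Fin.val_succ]
        ring_nf
      | succ i =>
        simp only [A, diagBlock, submatrix_apply, Fin.one_succAbove_succ, updateRow_apply,
          Fin.succ_ne_zero, ↓reduceIte, of_apply, Fin.val_succ]
        ring_nf
    rw [det_succ_column_zero, Fin.sum_univ_succ, Fin.sum_univ_succ,
      Finset.sum_eq_zero (fun i _ => by rw [hcol, mul_zero, zero_mul]), Fin.succ_zero_eq_one,
      hminor₀, hminor₁, ih, Finset.sum_range_succ' _ (N + 1), Fin.val_zero, Fin.val_one, h00, h10,
      add_zero, add_comm]
    simp only [pow_zero, pow_one, one_mul, neg_mul, neg_neg]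
    congr 1
    refine Finset.sum_congr rfl fun k _ => ?_
    rw [add_assoc, add_comm 1 k, Nat.add_sub_add_right]

theorem det_diagBlock_eq_sum (hsub : ∀ i, f (i + 1) i = -1)
    (hlow : ∀ i j, j + 1 < i → f i j = 0) {n t : ℕ} (ht : t < n) :
    (diagBlock f t (n - t)).det =
      ∑ k ∈ range (n - t), f t (t + k) * (diagBlock f (t + k + 1) (n - (t + k + 1))).det := by
  obtain ⟨N, hN⟩ : ∃ N, n - t = N + 1 := ⟨n - t - 1, by omega⟩
  have hrow : diagBlock f t (N + 1) =
      (diagBlock f t (N + 1)).updateRow 0 fun j => f t (t + j) := by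
    ext i j
    rcases eq_or_ne i 0 with rfl | hi <;> simp [diagBlock, updateRow_apply, *]
  rw [hN, hrow, det_updateRow_zero_diagBlock hsub hlow]
  refine Finset.sum_congr rfl fun k _ => ?_
  rw [show n - (t + k + 1) = N - k by omega]

end Hessenberg

/-- `Umat m u a i j` unfolds to `umatEntry m u a i j`, so every trailing principal submatrix of
`Umat m u a` is definitionally a `diagBlock (umatEntry m u a)`. -/
def umatEntry (m u : ℕ) (a : ℕ → ℂ) (i j : ℕ) : ℂ :=
  if i ≤ j ∧ j - i ≤ m - 2 then a (m - 1 - (j - i))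
  else if i = j + 1 then -1
  else if i = 0 ∧ j = u - 1 then 1
  else 0

def bandCoeff (m : ℕ) (a : ℕ → ℂ) (k : ℕ) : ℂ :=
  if k ≤ m - 2 then a (m - 1 - k) else 0

section Umat

variable {m u : ℕ} {a lam : ℕ → ℂ}

theorem umatEntry_succ_self (i : ℕ) : umatEntry m u a (i + 1) i = -1 := by
  simp [umatEntry]

theorem umatEntry_of_lt {i j : ℕ} (h : j + 1 < i) : umatEntry m u a i j = 0 := by
  rw [umatEntry, if_neg (by omega), if_neg (by omega), if_neg (by omega)]

theorem umatEntry_self_add (hm : 2 ≤ m) (hmu : m ≤ u) (t k : ℕ) :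
    umatEntry m u a t (t + k) = bandCoeff m a k + if t = 0 ∧ k = u - 1 then 1 else 0 := by
  simp only [umatEntry, bandCoeff, Nat.le_add_right, true_and, Nat.add_sub_cancel_left]
  split_ifs <;> first | omega | simp

theorem lam_eq_sum_range
    (hrec : ∀ t : ℕ, m ≤ t → lam t = ∑ k ∈ Finset.Icc 1 (m - 1), a (m - k) * lam (t - k))
    {T : ℕ} (hT : m ≤ T) :
    lam T = ∑ k ∈ range (m - 1), bandCoeff m a k * lam (T - (k + 1)) := by
  rw [hrec T hT, ← Finset.Ico_add_one_right_eq_Icc, Finset.sum_Ico_eq_sum_range]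
  refine Finset.sum_congr (by simp) fun k hk => ?_
  rw [mem_range] at hk
  rw [bandCoeff, if_pos (by omega), add_comm 1 k, show m - 1 - k = m - (k + 1) by omega]

theorem sum_bandCoeff_mul_lam (hm : 2 ≤ m)
    (hlam0 : ∀ t : ℕ, 1 ≤ t → t ≤ m - 2 → lam t = 0)
    (hrec : ∀ t : ℕ, m ≤ t → lam t = ∑ k ∈ Finset.Icc 1 (m - 1), a (m - k) * lam (t - k))
    {t : ℕ} (ht : t < u) :
    ∑ k ∈ range (u - t), bandCoeff m a k * lam (u + m - 1 - (t + k + 1)) =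
      lam (u + m - 1 - t) := by
  set g : ℕ → ℂ := fun k => bandCoeff m a k * lam (u + m - 1 - (t + k + 1))
  have hband : ∀ k ≥ m - 1, g k = 0 := fun k hk => by
    simp only [g, bandCoeff, if_neg (show ¬k ≤ m - 2 by omega), zero_mul]
  have hblock : ∀ k ≥ u - t, g k = 0 := fun k hk => by
    by_cases hk' : k ≥ m - 1
    · exact hband k hk'
    · simp only [g, hlam0 (u + m - 1 - (t + k + 1)) (by omega) (by omega), mul_zero]
  rw [← Finset.eventually_constant_sum hblock (Nat.le_add_right (u - t) (m - 1)),
    Finset.eventually_constant_sum hband (Nat.le_add_left (m - 1) (u - t)),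
    lam_eq_sum_range hrec (by omega)]
  refine Finset.sum_congr rfl fun k _ => ?_
  simp only [g, Nat.sub_sub, add_assoc]

theorem det_diagBlock_umatEntry (hm : 2 ≤ m) (hmu : m ≤ u)
    (hlam0 : ∀ t : ℕ, 1 ≤ t → t ≤ m - 2 → lam t = 0)
    (hlam1 : lam (m - 1) = 1)
    (hrec : ∀ t : ℕ, m ≤ t → lam t = ∑ k ∈ Finset.Icc 1 (m - 1), a (m - k) * lam (t - k))
    {t : ℕ} (ht : t ≤ u) :
    (diagBlock (umatEntry m u a) t (u - t)).det =
      lam (u + m - 1 - t) + if t = 0 then 1 else 0 := by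
  induction hd : u - t using Nat.strong_induction_on generalizing t with
  | _ d ih =>
    subst hd
    rcases ht.eq_or_lt with rfl | ht
    · rw [Nat.sub_self, det_isEmpty]
      simp [show t ≠ 0 by omega, show t + m - 1 - t = m - 1 by omega, hlam1]
    have hminor : ∀ k ∈ range (u - t),
        (diagBlock (umatEntry m u a) (t + k + 1) (u - (t + k + 1))).det =
          lam (u + m - 1 - (t + k + 1)) := fun k hk => by
      rw [mem_range] at hk
      rw [ih _ (by omega) (by omega) rfl, if_neg (by omega), add_zero]
    rw [det_diagBlock_eq_sum umatEntry_succ_self (fun _ _ => umatEntry_of_lt) ht,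
      Finset.sum_congr rfl fun k hk => by rw [hminor k hk, umatEntry_self_add hm hmu, add_mul],
      Finset.sum_add_distrib, sum_bandCoeff_mul_lam hm hlam0 hrec ht]
    congr 1
    split_ifs with ht0
    · subst ht0
      simp [Finset.sum_ite_eq', show u - 1 < u by omega,
        show u + m - 1 - (u - 1 + 1) = m - 1 by omega, hlam1]
    · simp [ht0]

end Umat

theorem stmt14 (m n u : ℕ) (hm : 3 ≤ m) (hmn : m ≤ n) (hu : u = m + n - 2)
    (a : ℕ → ℂ) (lam : ℕ → ℂ)
    (hlam0 : ∀ t : ℕ, 1 ≤ t → t ≤ m - 2 → lam t = 0)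
    (hlam1 : lam (m - 1) = 1)
    (hrec : ∀ t : ℕ, m ≤ t → lam t = ∑ k ∈ Finset.Icc 1 (m - 1), a (m - k) * lam (t - k))
    (t : ℕ) (ht : t ≤ u - 1) :
    ((Umat m u a).submatrix
        (fun i : Fin (u - t) => (⟨t + (i : ℕ), by have := i.isLt; omega⟩ : Fin u))
        (fun j : Fin (u - t) => (⟨t + (j : ℕ), by have := j.isLt; omega⟩ : Fin u))).det =
      lam (u + m - 1 - t) + (if t = 0 then 1 else 0) :=
  det_diagBlock_umatEntry (by omega) (by omega) hlam0 hlam1 hrec (by omega)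
end
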